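/- Let n ≥ 3 and let K ⊆ ℝⁿ be a convex polytope with nonempty interior having exactly m vertices, where m ≥ n+1. Set t = 2^{n/(m−1)}. Then Γ_{2^n}(K) ≤ (m−1)/(m−1 + k(m−1, t)) ≤ (m−1)/(m−1 + ⌊a(t)·(m−1)⌋). -/

import Mathlib

open Real Set Pointwise

/-- The covering functional `Γ_m(K)`: the infimum of all `γ > 0` such that `K` can be
covered by `m` translates of `γ • K`. -/
noncomputable def coveringFunctional {n : ℕ} (m : ℕ) (K : Set (Fin n → ℝ)) : ℝ :=
  sInf {γ : ℝ | 0 < γ ∧ ∃ C : Set (Fin n → ℝ), C.Finite ∧ C.ncard = m ∧ K ⊆ C + γ • K}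

/-- `f x = (1+x)^(1+x) / x^x` (real powers). -/
noncomputable def f (x : ℝ) : ℝ := (1 + x) ^ (1 + x) / x ^ x

open Finset

/-!
Write `K = conv F` with `F` its `N + 1 = m` vertices and put `s = N + k`. A point `x = ∑ λ_y • y`
of `K` is covered by the grid point `c = ∑ (P_y / s) • y`, where `P_y ≤ ⌊s λ_y⌋` and `∑ P_y = k`:
the remainder `x - c` has nonnegative coefficients summing to `1 - k / s = N / s`, so it lies in
`(N / s) • K`. There are at most `C(N + k, N) ≤ t ^ N = 2 ^ n` grid points.
For the second inequality, `C(N + j, N) a ^ j ≤ (1 + a) ^ (N + j)` and `j ≤ a N` give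
`C(N + j, N) ≤ f(a) ^ N = t ^ N < C(N + k + 1, N)`, hence `j = ⌊a N⌋ ≤ k`.
-/

theorem exists_mem_finsuppAntidiag_le {ι : Type*} [DecidableEq ι] (s : Finset ι) (b : ι → ℕ)
    {k : ℕ} (hk : k ≤ ∑ i ∈ s, b i) : ∃ P ∈ s.finsuppAntidiag k, ∀ i ∈ s, P i ≤ b i := by
  induction k with
  | zero => exact ⟨0, by simp, by simp⟩
  | succ k ih =>
    obtain ⟨P, hP, hPb⟩ := ih (by omega)
    rw [mem_finsuppAntidiag] at hP
    obtain ⟨i, hi, hlt⟩ : ∃ i ∈ s, P i < b i := by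
      by_contra! h
      have hsum := Finset.sum_le_sum h
      rw [hP.1] at hsum
      omega
    refine ⟨P + Finsupp.single i 1, mem_finsuppAntidiag.2 ⟨?_, ?_⟩, fun i' hi' => ?_⟩
    · simp [Finset.sum_add_distrib, hP.1, Finsupp.single_apply, hi]
    · exact Finsupp.support_add.trans (union_subset hP.2 (by simpa using hi))
    · rcases eq_or_ne i' i with rfl | hne
      · simpa using hlt
      · simpa [Finsupp.single_apply, hne.symm] using hPb i' hi'

theorem choose_mul_pow_le_one_add_pow {a : ℝ} (ha : 0 ≤ a) (n j : ℕ) :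
    (n.choose j : ℝ) * a ^ j ≤ (1 + a) ^ n := by
  rcases le_or_gt j n with hj | hj
  · rw [add_comm, add_pow]
    refine le_trans (le_of_eq (by ring)) (Finset.single_le_sum (f := fun i =>
      a ^ i * 1 ^ (n - i) * (n.choose i : ℝ)) (fun i _ => by positivity)
      (Finset.mem_range.2 (Nat.lt_succ_of_le hj)))
  · rw [Nat.choose_eq_zero_of_lt hj]
    simpa using pow_nonneg (by linarith) n

theorem f_eq_mul_rpow {a : ℝ} (ha : 0 < a) : f a = (1 + a) * ((1 + a) / a) ^ a := by
  rw [f, div_rpow (by positivity) ha.le, rpow_add (by positivity), rpow_one, mul_div_assoc]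

theorem choose_add_le_f_pow {a : ℝ} (ha : 0 < a) {N j : ℕ} (hj : (j : ℝ) ≤ a * N) :
    ((N + j).choose N : ℝ) ≤ f a ^ N := by
  have hq : 1 ≤ (1 + a) / a := by rw [le_div_iff₀ ha]; linarith
  calc ((N + j).choose N : ℝ) = ((N + j).choose j : ℝ) * a ^ j / a ^ j := by
        rw [Nat.choose_symm_add, mul_div_cancel_right₀ _ (by positivity)]
    _ ≤ (1 + a) ^ (N + j) / a ^ j := by gcongr; exact choose_mul_pow_le_one_add_pow ha.le _ _
    _ = (1 + a) ^ N * ((1 + a) / a) ^ (j : ℝ) := by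
        rw [rpow_natCast, div_pow, pow_add]; ring
    _ ≤ (1 + a) ^ N * ((1 + a) / a) ^ (a * N) := by gcongr
    _ = f a ^ N := by
        rw [f_eq_mul_rpow ha, mul_pow, ← rpow_natCast (_ ^ a), ← rpow_mul (by positivity)]

theorem floor_mul_le_of_f_pow_lt {a : ℝ} (ha : 0 < a) {N k : ℕ}
    (hk : f a ^ N < ((N + k + 1).choose N : ℝ)) : ⌊a * N⌋₊ ≤ k := by
  by_contra! h
  have hfloor := choose_add_le_f_pow ha (Nat.floor_le (by positivity) : (⌊a * N⌋₊ : ℝ) ≤ a * N)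
  have hmono : (N + k + 1).choose N ≤ (N + ⌊a * N⌋₊).choose N := Nat.choose_le_choose N (by omega)
  have : ((N + k + 1).choose N : ℝ) ≤ (N + ⌊a * N⌋₊).choose N := by exact_mod_cast hmono
  linarith

section SimplexGrid

variable {E : Type*} [AddCommGroup E] [Module ℝ E]

theorem sum_smul_mem_smul_convexHull {F : Finset E} {w : E → ℝ} {γ : ℝ} (hγ : 0 < γ)
    (hw₀ : ∀ y ∈ F, 0 ≤ w y) (hw₁ : ∑ y ∈ F, w y = γ) :
    ∑ y ∈ F, w y • y ∈ γ • convexHull ℝ (F : Set E) := by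
  refine ⟨∑ y ∈ F, (w y / γ) • y, Finset.mem_convexHull'.2 ⟨fun y => w y / γ,
    fun y hy => div_nonneg (hw₀ y hy) hγ.le, by rw [← sum_div, hw₁, div_self hγ.ne'], rfl⟩, ?_⟩
  simp only [smul_sum, smul_smul, mul_div_cancel₀ _ hγ.ne']

variable [DecidableEq E]

noncomputable def simplexGrid (F : Finset E) (k : ℕ) : Finset E :=
  (F.finsuppAntidiag k).image fun P => ∑ y ∈ F, ((P y : ℝ) / (#F - 1 + k)) • y

theorem card_simplexGrid_le (F : Finset E) (k : ℕ) :
    #(simplexGrid F k) ≤ (#F + k - 1).choose k :=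
  card_image_le.trans (card_finsuppAntidiag_nat_eq_choose k).le

theorem convexHull_subset_simplexGrid_add (F : Finset E) (k : ℕ) (hF : 1 < #F) :
    convexHull ℝ (F : Set E) ⊆
      (simplexGrid F k : Set E) + ((#F - 1 : ℝ) / (#F - 1 + k)) • convexHull ℝ (F : Set E) := by
  have hF' : (1 : ℝ) < #F := by exact_mod_cast hF
  set s : ℝ := #F - 1 + k
  have hs : 0 < s := by positivity
  intro x hx
  obtain ⟨w, hw₀, hw₁, rfl⟩ := Finset.mem_convexHull'.1 hx
  -- each of the `#F` floors loses less than `1`, so they sum to more than `s - #F = k - 1`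
  have hfloor : k ≤ ∑ y ∈ F, ⌊w y * s⌋₊ := by
    have hlt : s < ∑ y ∈ F, ((⌊w y * s⌋₊ : ℝ) + 1) :=
      calc s = ∑ y ∈ F, w y * s := by rw [← sum_mul, hw₁, one_mul]
        _ < _ := sum_lt_sum_of_nonempty (card_pos.1 (by omega))
          fun y _ => Nat.lt_floor_add_one _
    rw [sum_add_distrib, sum_const, nsmul_one] at hlt
    have hk : (k : ℝ) < ∑ y ∈ F, (⌊w y * s⌋₊ : ℝ) + 1 := by linarith
    exact Nat.lt_add_one_iff.1 (by exact_mod_cast hk)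
  obtain ⟨P, hP, hPw⟩ := exists_mem_finsuppAntidiag_le F _ hfloor
  have hPk : ∑ y ∈ F, (P y : ℝ) = k := by exact_mod_cast (mem_finsuppAntidiag.1 hP).1
  refine ⟨_, mem_image_of_mem _ hP, _, ?_, add_sub_cancel _ _⟩
  rw [← sum_sub_distrib]
  simp_rw [← sub_smul]
  refine sum_smul_mem_smul_convexHull (by positivity) (fun y hy => ?_) ?_
  · rw [sub_nonneg, div_le_iff₀ hs]
    exact (Nat.cast_le.2 (hPw y hy)).trans (Nat.floor_le (by positivity [hw₀ y hy]))
  · rw [sum_sub_distrib, ← sum_div, hw₁, hPk, one_sub_div hs.ne']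
    simp only [s, add_sub_cancel_right]

end SimplexGrid

theorem convexHull_extremePoints_convexHull_finset {E : Type*} [NormedAddCommGroup E]
    [NormedSpace ℝ E] (V : Finset E) :
    convexHull ℝ ((convexHull ℝ (V : Set E)).extremePoints ℝ) = convexHull ℝ (V : Set E) := by
  have hfin := V.finite_toSet.subset (extremePoints_convexHull_subset (𝕜 := ℝ))
  rw [← (hfin.isCompact_convexHull (𝕜 := ℝ)).isClosed.closure_eq]
  exact closure_convexHull_extremePoints (V.finite_toSet.isCompact_convexHull (𝕜 := ℝ))
    (convex_convexHull ℝ _)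

theorem coveringFunctional_le {n m : ℕ} (hn : n ≠ 0) {K : Set (Fin n → ℝ)}
    (C : Finset (Fin n → ℝ)) (hCm : #C ≤ m) {γ : ℝ} (hγ : 0 < γ) (hK : K ⊆ C + γ • K) :
    coveringFunctional m K ≤ γ := by
  have : NeZero n := ⟨hn⟩
  obtain ⟨C', hCC', hC'm⟩ := Infinite.exists_superset_card_eq C m hCm
  refine csInf_le ⟨0, fun _ h => h.1.le⟩ ⟨hγ, C', C'.finite_toSet, by rw [ncard_coe_finset, hC'm],
    hK.trans (add_subset_add_right (coe_subset.2 hCC'))⟩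

theorem coveringFunctional_polytope_le_general (n m : ℕ) (hn : 3 ≤ n) (hm : n + 1 ≤ m)
    (K : Set (Fin n → ℝ))
    (hpoly : ∃ V : Finset (Fin n → ℝ), K = convexHull ℝ (V : Set (Fin n → ℝ)))
    (hvert : (Set.extremePoints ℝ K).ncard = m)
    (t : ℝ) (ht : t = (2 : ℝ) ^ ((n : ℝ) / ((m : ℝ) - 1)))
    (a : ℝ) (ha : 0 < a) (hfa : f a = t)
    (k : ℕ) (hk1 : (((m - 1) + k).choose (m - 1) : ℝ) ≤ t ^ (m - 1))
    (hk2 : t ^ (m - 1) < (((m - 1) + k + 1).choose (m - 1) : ℝ)) :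
    coveringFunctional (2 ^ n) K ≤ ((m : ℝ) - 1) / (((m : ℝ) - 1) + k) ∧
      ((m : ℝ) - 1) / (((m : ℝ) - 1) + k) ≤
        ((m : ℝ) - 1) / (((m : ℝ) - 1) + (⌊a * ((m : ℝ) - 1)⌋₊ : ℝ)) := by
  classical
  obtain ⟨N, rfl⟩ : ∃ N, m = N + 1 := ⟨m - 1, by omega⟩
  rw [Nat.add_sub_cancel] at hk1 hk2
  have hN : ((N + 1 : ℕ) : ℝ) - 1 = N := by push_cast; ring
  have hNpos : (0 : ℝ) < N := by exact_mod_cast (by omega : 0 < N)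
  rw [hN] at ht ⊢
  have htN : t ^ N = 2 ^ n := by
    rw [ht, ← rpow_natCast, ← rpow_mul zero_le_two, div_mul_cancel₀ _ hNpos.ne', rpow_natCast]
  refine ⟨?_, by gcongr; exact_mod_cast floor_mul_le_of_f_pow_lt ha (hfa ▸ hk2)⟩
  obtain ⟨V, rfl⟩ := hpoly
  have hE := V.finite_toSet.subset (extremePoints_convexHull_subset (𝕜 := ℝ))
  have hFm : #hE.toFinset = N + 1 := by rw [← ncard_eq_toFinset_card _ hE, hvert]
  have hcover := convexHull_subset_simplexGrid_add hE.toFinset k (by omega)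
  rw [hE.coe_toFinset, convexHull_extremePoints_convexHull_finset, hFm, hN] at hcover
  refine coveringFunctional_le (by omega) _ ?_ (by positivity) hcover
  calc #(simplexGrid hE.toFinset k) ≤ (N + k).choose N := by
        simpa [hFm, Nat.choose_symm_add, show N + 1 + k - 1 = N + k by omega]
          using card_simplexGrid_le hE.toFinset k
    _ ≤ 2 ^ n := by exact_mod_cast htN ▸ hk1

/-- Let `n ≥ 3` and `K ⊆ ℝⁿ` be a convex polytope with nonempty interior having exactly
`m` vertices, `m ≥ n + 1`. Let `t = 2^(n/(m-1))`, `a = a(t)` the positive solution of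
`f a = t`, and `k = k(m-1,t)` the nonnegative integer with
`C(m-1+k, m-1) ≤ t^(m-1) < C(m-1+k+1, m-1)`. Then
`Γ_{2^n}(K) ≤ (m−1)/(m−1+k) ≤ (m−1)/(m−1+⌊a·(m−1)⌋)`. -/
theorem coveringFunctional_polytope_le (n m : ℕ) (hn : 3 ≤ n) (hm : n + 1 ≤ m)
    (K : Set (Fin n → ℝ))
    (hpoly : ∃ V : Finset (Fin n → ℝ), K = convexHull ℝ (V : Set (Fin n → ℝ)))
    (hint : (interior K).Nonempty)
    (hvert : (Set.extremePoints ℝ K).ncard = m)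
    (t : ℝ) (ht : t = (2 : ℝ) ^ ((n : ℝ) / ((m : ℝ) - 1)))
    (a : ℝ) (ha : 0 < a) (hfa : f a = t)
    (k : ℕ) (hk1 : (((m - 1) + k).choose (m - 1) : ℝ) ≤ t ^ (m - 1))
    (hk2 : t ^ (m - 1) < (((m - 1) + k + 1).choose (m - 1) : ℝ)) :
    coveringFunctional (2 ^ n) K ≤ ((m : ℝ) - 1) / (((m : ℝ) - 1) + k) ∧
      ((m : ℝ) - 1) / (((m : ℝ) - 1) + k) ≤
        ((m : ℝ) - 1) / (((m : ℝ) - 1) + (⌊a * ((m : ℝ) - 1)⌋₊ : ℝ)) :=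
  coveringFunctional_polytope_le_general n m hn hm K hpoly hvert t ht a ha hfa k hk1 hk2
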